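/- Let a_{ij} ≥ 0 (i,j ∈ {1,…,n}) with a_{ii} = 0, let L ∈ ℝ^{n×n} be the Laplacian matrix defined by l_{ii} = Σ_{j=1}^n a_{ij} and l_{ij} = −a_{ij} for i ≠ j, let 0 < m < n, and suppose a_{ij} = 0 for all i ∈ {m+1,…,n} and all j (so L = [[L₁, L₂],[0, 0]] with L₁ ∈ ℝ^{m×m}, L₂ ∈ ℝ^{m×(n−m)}). Suppose that for every i ∈ {1,…,m} there exist j ∈ {m+1,…,n} and a finite sequence of indices j = l_0, l_1, …, l_k = i with a_{l_{r+1} l_r} > 0 for all r. Then every entry of −L₁^{-1} L₂ is nonnegative and every row sum of −L₁^{-1} L₂ equals one. -/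

import Mathlib

/-!
`L₁` obeys a discrete minimum principle: if `L₁ x ≥ 0`, extend `x` by zero to the leaders; at a
negative minimum the Laplacian inequality forces every in-neighbour to share the minimum, so the
minimum propagates backward along a path to a leader, where the value is `0`. Hence `L₁ x ≥ 0`
implies `x ≥ 0`, which makes `L₁` invertible with `L₁⁻¹ ≥ 0`. As `-L₂ ≥ 0` and the rows of
`[L₁ L₂]` sum to zero, `-L₁⁻¹ L₂ ≥ 0` and `-L₁⁻¹ L₂ 𝟙 = L₁⁻¹ L₁ 𝟙 = 𝟙`.
-/

open Function Matrix Relation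

theorem Relation.reflTransGen_of_forall_lt {α : Type*} {R : α → α → Prop} (l : ℕ → α) {k : ℕ}
    (h : ∀ r < k, R (l r) (l (r + 1))) : ReflTransGen R (l 0) (l k) :=
  (reflTransGen_of_succ_of_le (fun r s => R (l r) (l s)) (fun r hr => h r hr.2)
    k.zero_le).lift l fun _ _ => id

namespace Matrix

variable {ι κ V : Type*} [Fintype κ]

/-- Collatz's monotone matrices; for square real matrices this amounts to being invertible with
an entrywise nonnegative inverse. -/
def IsMonotone [Fintype ι] (M : Matrix ι ι ℝ) : Prop := ∀ x, 0 ≤ M *ᵥ x → 0 ≤ x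

section IsMonotone

variable [Fintype ι] [DecidableEq ι] {M : Matrix ι ι ℝ}

theorem IsMonotone.isUnit (hM : M.IsMonotone) : IsUnit M := by
  refine mulVec_injective_iff_isUnit.mp fun u v huv => ?_
  have h₁ := hM (u - v) (by rw [mulVec_sub, huv, sub_self])
  have h₂ := hM (v - u) (by rw [mulVec_sub, huv, sub_self])
  exact le_antisymm (sub_nonneg.mp h₂) (sub_nonneg.mp h₁)

theorem IsMonotone.inv_nonneg (hM : M.IsMonotone) (i j : ι) : 0 ≤ M⁻¹ i j := by
  have hcol : M *ᵥ (M⁻¹ *ᵥ Pi.single j 1) = Pi.single j 1 := by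
    rw [mulVec_mulVec, mul_nonsing_inv M ((isUnit_iff_isUnit_det M).mp hM.isUnit), one_mulVec]
  have := hM _ (hcol ▸ Pi.single_nonneg.mpr zero_le_one) i
  rwa [mulVec_single_one] at this

theorem IsMonotone.neg_inv_mul_rowStochastic (hM : M.IsMonotone) {N : Matrix ι κ ℝ}
    (hN : ∀ i j, N i j ≤ 0) (hrow : M *ᵥ 1 + N *ᵥ 1 = 0) :
    (∀ i j, 0 ≤ (-(M⁻¹ * N)) i j) ∧ ∀ i, ∑ j, (-(M⁻¹ * N)) i j = 1 := by
  refine ⟨fun i j => ?_, fun i => ?_⟩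
  · rw [neg_apply, mul_apply, ← Finset.sum_neg_distrib]
    exact Finset.sum_nonneg fun k _ => by
      nlinarith [hM.inv_nonneg i k, hN k j]
  · have hones : -(M⁻¹ * N) *ᵥ 1 = 1 := by
      rw [neg_mulVec, ← mulVec_mulVec, ← mulVec_neg, ← eq_neg_of_add_eq_zero_left hrow,
        mulVec_mulVec, nonsing_inv_mul M ((isUnit_iff_isUnit_det M).mp hM.isUnit), one_mulVec]
    simpa only [mulVec, dotProduct, Pi.one_apply, mul_one] using congrFun hones i

end IsMonotone

theorem submatrix_mulVec_apply_eq_mulVec_extend [Fintype V] {α : Type*}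
    [NonUnitalNonAssocSemiring α] (A : Matrix V V α) {e : ι → V} (f : κ → V) (hf : Injective f)
    (x : κ → α) (i : ι) :
    (A.submatrix e f *ᵥ x) i = (A *ᵥ extend f x 0) (e i) := by
  refine Fintype.sum_of_injective f hf _ _ (fun v hv => ?_) fun j => ?_
  · rw [extend_apply' _ _ _ hv, Pi.zero_apply, mul_zero]
  · rw [hf.extend_apply]
    rfl

end Matrix

section Laplacian

variable {V ι κ : Type*} [Fintype V] [DecidableEq V]

/-- The Laplacian of the weighted digraph in which `a u v` is the weight of the edge from `v`
to `u`. -/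
def laplacianMatrix (a : V → V → ℝ) : Matrix V V ℝ :=
  diagonal (fun v => ∑ k, a v k) - of a

theorem laplacianMatrix_apply_of_ne (a : V → V → ℝ) {u v : V} (h : u ≠ v) :
    laplacianMatrix a u v = -a u v := by
  simp [laplacianMatrix, h]

theorem laplacianMatrix_mulVec_apply (a : V → V → ℝ) (y : V → ℝ) (i : V) :
    (laplacianMatrix a *ᵥ y) i = ∑ k, a i k * (y i - y k) := by
  simp only [laplacianMatrix, sub_mulVec, Pi.sub_apply, mulVec_diagonal, mul_sub,
    Finset.sum_sub_distrib, Finset.sum_mul]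
  rfl

theorem laplacianMatrix_mulVec_one (a : V → V → ℝ) : laplacianMatrix a *ᵥ 1 = 0 := by
  ext i
  simp [laplacianMatrix_mulVec_apply]

theorem eq_of_isMin_of_laplacianMatrix_mulVec_nonneg {a : V → V → ℝ} (ha : ∀ u v, 0 ≤ a u v)
    {y : V → ℝ} {i k : V} (hmin : ∀ j, y i ≤ y j) (hi : 0 ≤ (laplacianMatrix a *ᵥ y) i)
    (hik : 0 < a i k) : y k = y i := by
  rw [laplacianMatrix_mulVec_apply] at hi
  have hterm : ∀ j ∈ Finset.univ, a i j * (y i - y j) ≤ 0 := fun j _ =>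
    mul_nonpos_of_nonneg_of_nonpos (ha i j) (sub_nonpos.mpr (hmin j))
  have hzero := (Finset.sum_eq_zero_iff_of_nonpos hterm).mp
    (le_antisymm (Finset.sum_nonpos hterm) hi) k (Finset.mem_univ k)
  rcases mul_eq_zero.mp hzero with h | h
  · exact absurd h hik.ne'
  · linarith

/-- Discrete minimum principle, with `B` as the boundary. -/
theorem nonneg_of_laplacianMatrix_mulVec_nonneg {a : V → V → ℝ} (ha : ∀ u v, 0 ≤ a u v)
    {B : Set V} {y : V → ℝ} (hB : ∀ v ∈ B, y v = 0)
    (hy : ∀ v ∉ B, 0 ≤ (laplacianMatrix a *ᵥ y) v)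
    (hreach : ∀ v ∉ B, ∃ b ∈ B, ReflTransGen (fun u w => 0 < a w u) b v) : 0 ≤ y := by
  by_contra hneg
  obtain ⟨v, hv⟩ : ∃ v, y v < 0 := by simpa [Pi.le_def] using hneg
  have : Nonempty V := ⟨v⟩
  obtain ⟨i₀, hi₀⟩ := Finite.exists_min y
  have hc : y i₀ < 0 := (hi₀ v).trans_lt hv
  have hnotB : ∀ w, y w = y i₀ → w ∉ B := fun w hw hwB => by linarith [hB w hwB]
  -- Minimizers are closed under taking in-neighbours, so the minimum propagates back to `B`.
  have hprop : ∀ u w, ReflTransGen (fun u w => 0 < a w u) u w → y w = y i₀ → y u = y i₀ := by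
    intro u w huw
    induction huw using ReflTransGen.head_induction_on with
    | refl => exact id
    | head hedge _ ih =>
      intro hw
      have hmin := ih hw
      rw [← hmin]
      exact eq_of_isMin_of_laplacianMatrix_mulVec_nonneg ha (fun j => hmin ▸ hi₀ j)
        (hy _ (hnotB _ hmin)) hedge
  obtain ⟨b, hb, hpath⟩ := hreach i₀ (hnotB i₀ rfl)
  exact hnotB b (hprop b i₀ hpath rfl) hb

theorem isMonotone_laplacianMatrix_submatrix [Fintype ι] {a : V → V → ℝ}
    (ha : ∀ u v, 0 ≤ a u v) {e : ι → V} (he : Injective e)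
    (hreach : ∀ i, ∃ b ∉ Set.range e, ReflTransGen (fun u w => 0 < a w u) b (e i)) :
    ((laplacianMatrix a).submatrix e e).IsMonotone := by
  intro x hx
  have hy : 0 ≤ extend e x 0 := by
    refine nonneg_of_laplacianMatrix_mulVec_nonneg ha (B := (Set.range e)ᶜ)
      (fun v hv => extend_apply' _ _ _ hv) (fun v hv => ?_) fun v hv => ?_
    · obtain ⟨i, rfl⟩ := not_not.mp hv
      simpa [submatrix_mulVec_apply_eq_mulVec_extend _ _ he] using hx i
    · obtain ⟨i, rfl⟩ := not_not.mp hv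
      exact hreach i
  intro i
  simpa [he.extend_apply] using hy (e i)

theorem laplacianMatrix_submatrix_mulVec_one_add [Fintype ι] [Fintype κ] (a : V → V → ℝ)
    (σ : ι ⊕ κ ≃ V) :
    (laplacianMatrix a).submatrix (σ ∘ Sum.inl) (σ ∘ Sum.inl) *ᵥ 1 +
      (laplacianMatrix a).submatrix (σ ∘ Sum.inl) (σ ∘ Sum.inr) *ᵥ 1 = 0 := by
  ext i
  have := congrFun (laplacianMatrix_mulVec_one a) (σ (Sum.inl i))
  simp only [mulVec, dotProduct, Pi.one_apply, mul_one, Pi.add_apply, Pi.zero_apply] at this ⊢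
  rwa [← Equiv.sum_comp σ, Fintype.sum_sum_type] at this

end Laplacian

/-- Lemma 1 of the paper, second part: under the leader-follower structure and
the directed-path connectivity assumption, every entry of `-L₁⁻¹ L₂` is nonnegative and every
row sum of `-L₁⁻¹ L₂` equals one. -/
theorem laplacian_block_row_stochastic (n m : ℕ) (hmn : m < n)
    (a : Fin n → Fin n → ℝ)
    (ha_nonneg : ∀ i j, 0 ≤ a i j)
    (ha_diag : ∀ i, a i i = 0)
    (L : Matrix (Fin n) (Fin n) ℝ)
    (hL : ∀ i j, L i j = if i = j then ∑ k, a i k else -a i j)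
    (L₁ : Matrix (Fin m) (Fin m) ℝ)
    (hL₁ : ∀ i j, L₁ i j = L (Fin.castLE hmn.le i) (Fin.castLE hmn.le j))
    (L₂ : Matrix (Fin m) (Fin (n - m)) ℝ)
    (hL₂ : ∀ (i : Fin m) (j : Fin (n - m)),
      L₂ i j = L (Fin.castLE hmn.le i) ⟨m + (j : ℕ), by have := j.isLt; omega⟩)
    (hpath : ∀ i : Fin n, (i : ℕ) < m → ∃ j : Fin n, m ≤ (j : ℕ) ∧
      ∃ (k : ℕ) (l : ℕ → Fin n), l 0 = j ∧ l k = i ∧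
        ∀ r : ℕ, r < k → 0 < a (l (r + 1)) (l r)) :
    (∀ (i : Fin m) (j : Fin (n - m)), 0 ≤ (-(L₁⁻¹ * L₂)) i j) ∧
      (∀ i : Fin m, ∑ j : Fin (n - m), (-(L₁⁻¹ * L₂)) i j = 1) := by
  have hLa : L = laplacianMatrix a := by
    ext i j
    by_cases h : i = j
    · subst h; simp [hL, laplacianMatrix, ha_diag]
    · rw [hL, if_neg h, laplacianMatrix_apply_of_ne a h]
  set σ : Fin m ⊕ Fin (n - m) ≃ Fin n := finSumFinEquiv.trans (finCongr (by omega))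
  obtain rfl : L₁ = (laplacianMatrix a).submatrix (σ ∘ Sum.inl) (σ ∘ Sum.inl) := by
    ext i j; rw [hL₁, hLa]; rfl
  obtain rfl : L₂ = (laplacianMatrix a).submatrix (σ ∘ Sum.inl) (σ ∘ Sum.inr) := by
    ext i j; rw [hL₂, hLa]; rfl
  refine IsMonotone.neg_inv_mul_rowStochastic ?_ (fun i j => ?_)
    (laplacianMatrix_submatrix_mulVec_one_add a σ)
  · refine isMonotone_laplacianMatrix_submatrix ha_nonneg (σ.injective.comp Sum.inl_injective)
      fun i => ?_
    obtain ⟨j, hj, k, l, rfl, hlk, hl⟩ := hpath (σ (.inl i)) i.isLt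
    refine ⟨l 0, ?_, by rw [Function.comp_apply, ← hlk]; exact reflTransGen_of_forall_lt l hl⟩
    rintro ⟨i', hi'⟩
    have := congrArg Fin.val hi'
    simp [σ] at this
    omega
  · rw [submatrix_apply, Function.comp_apply, Function.comp_apply,
      laplacianMatrix_apply_of_ne a (σ.injective.ne Sum.inl_ne_inr)]
    exact neg_nonpos.mpr (ha_nonneg _ _)
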